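/- Let d ≥ 1, N ∈ ℕ, ρ ∈ ℝ^d with 0 < ρ_i < 1 and ρ_1+⋯+ρ_d < 1, and let α ∈ ℕ^{d+1} with 1 ≤ |α| ≤ N. Then the explicitly defined monic Krawtchouk polynomial L_α(·; ρ, N) is orthogonal to all polynomials of lower degree with respect to the Krawtchouk weight: for every β ∈ ℕ^{d+1} with |β| < |α|, Σ_{x ∈ Z_N^{d+1}} L_α(x; ρ, N) · m_β(x) · 𝛒^x / x! = 0. Moreover L_α is monic, i.e., in its defining expansion Σ_{γ ≤ α} c_γ m_γ the coefficient of m_α equals 1. -/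

import Mathlib

open Finset

/-- Pochhammer symbol `(a)_k = a (a+1) ⋯ (a+k-1)`. -/
noncomputable def poch (a : ℝ) : ℕ → ℝ
  | 0 => 1
  | k + 1 => poch a k * (a + k)

/-- Multi-index Pochhammer `(x)_γ = ∏ i (x i)_{γ i}`. -/
noncomputable def pochV {m : ℕ} (x : Fin m → ℝ) (γ : Fin m → ℕ) : ℝ :=
  ∏ i, poch (x i) (γ i)

/-- Multi-index factorial `γ! = ∏ i (γ i)!` (as a real number). -/
noncomputable def mfact {m : ℕ} (γ : Fin m → ℕ) : ℝ :=
  ∏ i, (Nat.factorial (γ i) : ℝ)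

/-- Shifted monomial `m_γ(x) = (-1)^{|γ|} (-x)_γ`. -/
noncomputable def mono {m : ℕ} (γ : Fin m → ℕ) (x : Fin m → ℝ) : ℝ :=
  (-1 : ℝ) ^ (∑ i, γ i) * pochV (fun i => -(x i)) γ

/-- `Z_N^{d+1} = {α ∈ ℕ^{d+1} : |α| = N}` as a finite set. -/
def ZN (d N : ℕ) : Finset (Fin (d + 1) → ℕ) :=
  (Fintype.piFinset fun _ => Finset.range (N + 1)).filter fun α => ∑ i, α i = N

/-- `{ν ∈ ℕ^d : |ν| = n}` as a finite set. -/
def idxSet (d n : ℕ) : Finset (Fin d → ℕ) :=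
  (Fintype.piFinset fun _ => Finset.range (n + 1)).filter fun ν => ∑ i, ν i = n

/-- The finite set `{γ ∈ ℕ^m : γ ≤ α}`. -/
def below {m : ℕ} (α : Fin m → ℕ) : Finset (Fin m → ℕ) :=
  Fintype.piFinset fun i => Finset.range (α i + 1)

/-- Monic Hahn polynomial `Q_α(x; κ, N)`. -/
noncomputable def monicQ (d N : ℕ) (κ : Fin (d + 1) → ℝ) (α : Fin (d + 1) → ℕ)
    (x : Fin (d + 1) → ℝ) : ℝ :=
  poch (-(N : ℝ)) (∑ i, α i) * pochV (fun i => κ i + 1) α /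
      poch ((∑ i, κ i) + d + (∑ i, α i)) (∑ i, α i) *
    ∑ γ ∈ below α,
      pochV (fun i => -(α i : ℝ)) γ * poch ((∑ i, κ i) + d + (∑ i, α i)) (∑ i, γ i) *
          (-1 : ℝ) ^ (∑ i, γ i) /
          (mfact γ * pochV (fun i => κ i + 1) γ * poch (-(N : ℝ)) (∑ i, γ i)) *
        mono γ x

/-- One-variable Hahn polynomial `Q_n(x; a, b, M)` (a `₃F₂` sum). -/
noncomputable def hahn1 (n : ℕ) (x a b M : ℝ) : ℝ :=
  ∑ k ∈ Finset.range (n + 1),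
    poch (-(n : ℝ)) k * poch ((n : ℝ) + a + b + 1) k * poch (-x) k /
      (poch (a + 1) k * poch (-M) k * (Nat.factorial k : ℝ))

/-- The parameter `a_j = κ_{j+1}+⋯+κ_{d+1} + 2|ν^{j+1}| + d - j` (1-based `j`). -/
noncomputable def aj (d : ℕ) (κ : Fin (d + 1) → ℝ) (ν : Fin d → ℕ) (j : Fin d) : ℝ :=
  (∑ i ∈ Finset.univ.filter (fun i : Fin (d + 1) => (j : ℕ) < (i : ℕ)), κ i) +
    2 * (∑ i ∈ Finset.univ.filter (fun i : Fin d => (j : ℕ) < (i : ℕ)), (ν i : ℝ)) +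
    ((d - 1 - (j : ℕ) : ℕ) : ℝ)

/-- `|x_{j-1}| = x_1 + ⋯ + x_{j-1}` (1-based `j`). -/
noncomputable def sumLt (d : ℕ) (x : Fin (d + 1) → ℕ) (j : Fin d) : ℝ :=
  ∑ i ∈ Finset.univ.filter (fun i : Fin (d + 1) => (i : ℕ) < (j : ℕ)), (x i : ℝ)

/-- `|ν^{j+1}| = ν_{j+1} + ⋯ + ν_d` (1-based `j`). -/
noncomputable def sumGt (d : ℕ) (ν : Fin d → ℕ) (j : Fin d) : ℝ :=
  ∑ i ∈ Finset.univ.filter (fun i : Fin d => (j : ℕ) < (i : ℕ)), (ν i : ℝ)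

/-- Hahn polynomial of `d` variables `H_ν(x; κ, N)`. -/
noncomputable def hahnH (d N : ℕ) (κ : Fin (d + 1) → ℝ) (ν : Fin d → ℕ)
    (x : Fin (d + 1) → ℕ) : ℝ :=
  (-1 : ℝ) ^ (∑ i, ν i) / poch (-(N : ℝ)) (∑ i, ν i) *
    ∏ j : Fin d,
      poch (κ j.castSucc + 1) (ν j) / poch (aj d κ ν j + 1) (ν j) *
        poch (-(N : ℝ) + sumLt d x j + sumGt d ν j) (ν j) *
        hahn1 (ν j) (x j.castSucc : ℝ) (κ j.castSucc) (aj d κ ν j)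
          ((N : ℝ) - sumLt d x j - sumGt d ν j)

/-- Squared norm `B_ν(κ, N)` of the Hahn polynomial `H_ν(·; κ, N)`. -/
noncomputable def Bnorm (d N : ℕ) (κ : Fin (d + 1) → ℝ) (ν : Fin d → ℕ) : ℝ :=
  (-1 : ℝ) ^ (∑ i, ν i) * poch ((∑ i, κ i) + d + 1) (N + ∑ i, ν i) /
      (poch (-(N : ℝ)) (∑ i, ν i) * poch ((∑ i, κ i) + d + 1) N *
        poch ((∑ i, κ i) + d + 1) (2 * ∑ i, ν i)) *
    ∏ j : Fin d,
      poch (κ j.castSucc + aj d κ ν j + 1) (2 * ν j) * poch (κ j.castSucc + 1) (ν j) *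
          (Nat.factorial (ν j) : ℝ) /
        (poch (κ j.castSucc + aj d κ ν j + 1) (ν j) * poch (aj d κ ν j + 1) (ν j))

/-- Projection `Q_{α,n}(x; κ, N)` of `m_α/(κ+1)_α` onto the space of degree `n`. -/
noncomputable def monicQn (d N : ℕ) (κ : Fin (d + 1) → ℝ) (α : Fin (d + 1) → ℕ) (n : ℕ)
    (x : Fin (d + 1) → ℝ) : ℝ :=
  (-1 : ℝ) ^ (∑ i, α i) * poch (-(N : ℝ)) (∑ i, α i) * poch ((∑ i, κ i) + d + 1) (2 * n) /
      (poch (-(N : ℝ)) n * poch ((∑ i, κ i) + d + 1) ((∑ i, α i) + n)) *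
    ∑ β ∈ ZN d n,
      pochV (fun i => -(α i : ℝ)) β / (mfact β * pochV (fun i => κ i + 1) β) *
        monicQ d N κ β x

/-- The kernel `E_k(x, y; κ) = Σ_{|γ|=k} (-x)_γ (-y)_γ / (γ! (κ+1)_γ)`. -/
noncomputable def Efun (d : ℕ) (κ : Fin (d + 1) → ℝ) (x y : Fin (d + 1) → ℕ) (k : ℕ) : ℝ :=
  ∑ γ ∈ ZN d k,
    pochV (fun i => -(x i : ℝ)) γ * pochV (fun i => -(y i : ℝ)) γ /
      (mfact γ * pochV (fun i => κ i + 1) γ)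

/-- Monic Jacobi polynomial on the simplex `R_α^κ(x)`. -/
noncomputable def jacobiR (d : ℕ) (κ : Fin (d + 1) → ℝ) (α : Fin (d + 1) → ℕ)
    (x : Fin d → ℝ) : ℝ :=
  (-1 : ℝ) ^ (∑ i, α i) * pochV (fun i => κ i + 1) α /
      poch ((∑ i, κ i) + d + (∑ i, α i)) (∑ i, α i) *
    ∑ γ ∈ below α,
      pochV (fun i => -(α i : ℝ)) γ * poch ((∑ i, κ i) + d + (∑ i, α i)) (∑ i, γ i) /
          (pochV (fun i => κ i + 1) γ * mfact γ) *
        ∏ i, (Fin.snoc x (1 - ∑ i, x i) : Fin (d + 1) → ℝ) i ^ γ i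

/-- One-variable Krawtchouk polynomial `K_n(x; p, M)`. -/
noncomputable def kraw1 (n : ℕ) (x p M : ℝ) : ℝ :=
  ∑ k ∈ Finset.range (n + 1),
    poch (-(n : ℝ)) k * poch (-x) k / (poch (-M) k * (Nat.factorial k : ℝ) * p ^ k)

/-- The extended parameter `𝛒 = (ρ_1, …, ρ_d, 1 - |ρ|)`. -/
noncomputable def brho (d : ℕ) (ρ : Fin d → ℝ) : Fin (d + 1) → ℝ :=
  Fin.snoc ρ (1 - ∑ i, ρ i)

/-- `𝛒^γ = ∏ i 𝛒_i^{γ i}`. -/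
noncomputable def bpow (d : ℕ) (ρ : Fin d → ℝ) (γ : Fin (d + 1) → ℕ) : ℝ :=
  ∏ i, brho d ρ i ^ γ i

/-- `|𝛒_j| = ρ_1 + ⋯ + ρ_j` (1-based `j`). -/
noncomputable def sumLe (d : ℕ) (ρ : Fin d → ℝ) (j : Fin d) : ℝ :=
  ∑ i ∈ Finset.univ.filter (fun i : Fin d => (i : ℕ) ≤ (j : ℕ)), ρ i

/-- `|𝛒_{j-1}| = ρ_1 + ⋯ + ρ_{j-1}` (1-based `j`). -/
noncomputable def sumLtρ (d : ℕ) (ρ : Fin d → ℝ) (j : Fin d) : ℝ :=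
  ∑ i ∈ Finset.univ.filter (fun i : Fin d => (i : ℕ) < (j : ℕ)), ρ i

/-- Krawtchouk polynomial of `d` variables `K_ν(x; ρ, N)`. -/
noncomputable def krawH (d N : ℕ) (ρ : Fin d → ℝ) (ν : Fin d → ℕ)
    (x : Fin (d + 1) → ℕ) : ℝ :=
  (-1 : ℝ) ^ (∑ i, ν i) / poch (-(N : ℝ)) (∑ i, ν i) *
    ∏ j : Fin d,
      ρ j ^ ν j / (1 - sumLe d ρ j) ^ ν j *
        poch (-(N : ℝ) + sumLt d x j + sumGt d ν j) (ν j) *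
        kraw1 (ν j) (x j.castSucc : ℝ) (ρ j / (1 - sumLtρ d ρ j))
          ((N : ℝ) - sumLt d x j - sumGt d ν j)

/-- Squared norm `C_ν(ρ, N)` of the Krawtchouk polynomial `K_ν(·; ρ, N)`. -/
noncomputable def Cnorm (d N : ℕ) (ρ : Fin d → ℝ) (ν : Fin d → ℕ) : ℝ :=
  (-1 : ℝ) ^ (∑ i, ν i) / (poch (-(N : ℝ)) (∑ i, ν i) * (Nat.factorial N : ℝ)) *
    ∏ j : Fin d,
      (Nat.factorial (ν j) : ℝ) * ρ j ^ ν j /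
        (1 - sumLe d ρ j) ^ ((ν j : ℤ) - ((Fin.snoc ν 0 : Fin (d + 1) → ℕ) j.succ : ℤ))

/-- Monic Krawtchouk polynomial `L_α(x; ρ, N)`. -/
noncomputable def monicL (d N : ℕ) (ρ : Fin d → ℝ) (α : Fin (d + 1) → ℕ)
    (x : Fin (d + 1) → ℝ) : ℝ :=
  poch (-(N : ℝ)) (∑ i, α i) * bpow d ρ α *
    ∑ γ ∈ below α,
      pochV (fun i => -(α i : ℝ)) γ * (-1 : ℝ) ^ (∑ i, γ i) /
          (mfact γ * poch (-(N : ℝ)) (∑ i, γ i) * bpow d ρ γ) *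
        mono γ x

/-- Projection `L_{α,n}(x; ρ, N)` of `m_α/𝛒^α` onto the space of degree `n`. -/
noncomputable def monicLn (d N : ℕ) (ρ : Fin d → ℝ) (α : Fin (d + 1) → ℕ) (n : ℕ)
    (x : Fin (d + 1) → ℝ) : ℝ :=
  (-1 : ℝ) ^ (∑ i, α i) * poch (-(N : ℝ)) (∑ i, α i) / poch (-(N : ℝ)) n *
    ∑ β ∈ ZN d n,
      pochV (fun i => -(α i : ℝ)) β / (mfact β * bpow d ρ β) * monicL d N ρ β x

/-- The kernel `F_k(x, y; ρ) = Σ_{|γ|=k} (-x)_γ (-y)_γ / (γ! 𝛒^γ)`. -/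
noncomputable def Ffun (d : ℕ) (ρ : Fin d → ℝ) (x y : Fin (d + 1) → ℕ) (k : ℕ) : ℝ :=
  ∑ γ ∈ ZN d k,
    pochV (fun i => -(x i : ℝ)) γ * pochV (fun i => -(y i : ℝ)) γ / (mfact γ * bpow d ρ γ)


/-! At lattice points the shifted monomial `m_γ(x)` is the falling factorial `x^{\underline γ}`,
and the multinomial theorem (with `|𝛒| = 1`) gives
`Σ_{|x| = M} x^{\underline τ} 𝛒^x / x! = 𝛒^τ M^{\underline{|τ|}} / M!`.
Shifting `x = y + γ` and expanding `(y + γ)^{\underline β}` by Vandermonde's identity, the pairing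
of `L_α` with `m_β` becomes, for each `κ ≤ β`, an alternating sum
`Σ_{γ ≤ α} binom(α, γ) (-1)^{|γ|} q(γ)` with `q(γ) = γ^{\underline κ} (N - |γ|)^{\underline{|β - κ|}}`
a polynomial of total degree `|β| < |α|`. Monomial by monomial such a sum factors into
one-variable sums `Σ_k (-1)^k binom(n, k) k^j` with some `j < n`, which are `n`-th forward
differences of `k ↦ k^j`, hence zero. Monicity is the identity `(-α)_α (-1)^{|α|} = α!`. -/

noncomputable def descFactV {m : ℕ} (x γ : Fin m → ℕ) : ℝ :=
  ∏ i, ((x i).descFactorial (γ i) : ℝ)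

noncomputable def chooseV {m : ℕ} (α γ : Fin m → ℕ) : ℝ :=
  ∏ i, ((α i).choose (γ i) : ℝ)

noncomputable def powV {m : ℕ} (p : Fin m → ℝ) (x : Fin m → ℕ) : ℝ :=
  ∏ i, p i ^ x i

section

variable {m : ℕ}

lemma mem_below {α γ : Fin m → ℕ} : γ ∈ below α ↔ γ ≤ α := by
  simp [below, Pi.le_def]

lemma sum_add_sum_sub_of_le {β κ : Fin m → ℕ} (hκ : κ ≤ β) :
    ∑ i, κ i + ∑ i, (β - κ) i = ∑ i, β i := by
  rw [← sum_add_distrib]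
  exact sum_congr rfl fun i _ => Nat.add_sub_cancel' (hκ i)

lemma mfact_pos (γ : Fin m → ℕ) : 0 < mfact γ :=
  prod_pos fun _ _ => mod_cast Nat.factorial_pos _

lemma powV_ne_zero {p : Fin m → ℝ} (hp : ∀ i, p i ≠ 0) (γ : Fin m → ℕ) : powV p γ ≠ 0 :=
  prod_ne_zero_iff.2 fun i _ => pow_ne_zero _ (hp i)

lemma poch_eq_ascPochhammer_eval (a : ℝ) (k : ℕ) : poch a k = (ascPochhammer ℝ k).eval a := by
  induction k with
  | zero => simp [poch]
  | succ k ih => rw [poch, ih, ascPochhammer_succ_eval]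

lemma poch_neg_natCast (n k : ℕ) :
    poch (-(n : ℝ)) k = (-1) ^ k * (n.descFactorial k : ℝ) := by
  rw [poch_eq_ascPochhammer_eval, ascPochhammer_eval_neg_eq_descPochhammer,
    descPochhammer_eval_eq_descFactorial]

lemma pochV_neg_natCast (x γ : Fin m → ℕ) :
    pochV (fun i => -(x i : ℝ)) γ = (-1) ^ (∑ i, γ i) * descFactV x γ := by
  simp only [pochV, poch_neg_natCast, prod_mul_distrib, prod_pow_eq_pow_sum, descFactV]

lemma mono_natCast (γ x : Fin m → ℕ) : mono γ (fun i => (x i : ℝ)) = descFactV x γ := by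
  rw [mono, pochV_neg_natCast, ← mul_assoc, ← pow_add, Even.neg_one_pow ⟨_, rfl⟩, one_mul]

lemma descFactV_eq_zero_of_not_le {x τ : Fin m → ℕ} (h : ¬τ ≤ x) : descFactV x τ = 0 := by
  simp only [Pi.le_def, not_forall, not_le] at h
  obtain ⟨i, hi⟩ := h
  exact prod_eq_zero (mem_univ i) (by simp [Nat.descFactorial_eq_zero_iff_lt.2 hi])

lemma descFactV_self (α : Fin m → ℕ) : descFactV α α = mfact α := by
  simp only [descFactV, mfact, Nat.descFactorial_self]

lemma descFactV_eq_chooseV_mul_mfact (α γ : Fin m → ℕ) :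
    descFactV α γ = chooseV α γ * mfact γ := by
  simp only [descFactV, chooseV, mfact, ← prod_mul_distrib,
    Nat.descFactorial_eq_factorial_mul_choose, Nat.cast_mul, mul_comm]

lemma descFactV_add_mul_mfact (y τ : Fin m → ℕ) :
    descFactV (y + τ) τ * mfact y = mfact (y + τ) := by
  simp only [descFactV, mfact, ← prod_mul_distrib, Pi.add_apply]
  refine prod_congr rfl fun i _ => ?_
  have h := Nat.factorial_mul_descFactorial (Nat.le_add_left (τ i) (y i))
  rw [Nat.add_sub_cancel] at h
  rw [mul_comm]
  exact_mod_cast h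

lemma descFactorial_add_eq_sum (a b n : ℕ) :
    (a + b).descFactorial n =
      ∑ k ∈ range (n + 1), n.choose k * a.descFactorial k * b.descFactorial (n - k) := by
  rw [Nat.descFactorial_eq_factorial_mul_choose, Nat.add_choose_eq,
    Nat.sum_antidiagonal_eq_sum_range_succ_mk, mul_sum]
  refine sum_congr rfl fun k hk => ?_
  simp only [Nat.descFactorial_eq_factorial_mul_choose]
  rw [← Nat.choose_mul_factorial_mul_factorial (Nat.lt_succ_iff.1 (mem_range.1 hk))]
  ring

lemma descFactV_add (y γ β : Fin m → ℕ) :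
    descFactV (y + γ) β =
      ∑ κ ∈ below β, chooseV β κ * descFactV γ κ * descFactV y (β - κ) := by
  simp only [descFactV, Pi.add_apply, add_comm (y _), descFactorial_add_eq_sum, Nat.cast_sum,
    Nat.cast_mul, prod_univ_sum, below, chooseV, ← prod_mul_distrib, Pi.sub_apply]

lemma sum_piAntidiag_powV_div_mfact (p : Fin m → ℝ) (M : ℕ) :
    ∑ y ∈ piAntidiag univ M, powV p y / mfact y = (∑ i, p i) ^ M / M.factorial := by
  rw [sum_pow_eq_sum_piAntidiag, sum_div]
  refine sum_congr rfl fun y hy => ?_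
  have hM : (Nat.multinomial univ y : ℝ) * mfact y = M.factorial := by
    rw [mfact, mul_comm, ← Nat.cast_prod, ← Nat.cast_mul, Nat.multinomial_spec,
      (mem_piAntidiag.1 hy).1]
  rw [← hM, powV]
  field_simp [(mfact_pos y).ne', (Nat.multinomial_pos univ y).ne']

lemma sum_piAntidiag_eq_sum_piAntidiag_add {N : ℕ} {τ : Fin m → ℕ} (hτ : ∑ i, τ i ≤ N)
    (f : (Fin m → ℕ) → ℝ) (hf : ∀ x, ¬τ ≤ x → f x = 0) :
    ∑ x ∈ piAntidiag univ N, f x = ∑ y ∈ piAntidiag univ (N - ∑ i, τ i), f (y + τ) := by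
  symm
  change ∑ y ∈ _, f (addRightEmbedding τ y) = _
  rw [← sum_map _ (addRightEmbedding τ)]
  refine sum_subset (fun x hx => ?_) (fun x hx hx' => hf x fun hτx => hx' ?_)
  · obtain ⟨y, hy, rfl⟩ := mem_map.1 hx
    simp only [mem_piAntidiag, ne_eq, mem_univ, implies_true, and_true] at hy ⊢
    simp [sum_add_distrib, hy, Nat.sub_add_cancel hτ]
  · refine mem_map.2 ⟨x - τ, ?_, by ext i; simp [Nat.sub_add_cancel (hτx i)]⟩
    simp only [mem_piAntidiag, ne_eq, mem_univ, implies_true, and_true] at hx ⊢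
    rw [← hx, ← sum_tsub_distrib univ fun i _ => hτx i]
    rfl

lemma sum_descFactV_mul_powV_div_mfact {N : ℕ} (p : Fin m → ℝ) {τ : Fin m → ℕ}
    (hτ : ∑ i, τ i ≤ N) (g : (Fin m → ℕ) → ℝ) :
    ∑ x ∈ piAntidiag univ N, descFactV x τ * g x * powV p x / mfact x =
      powV p τ * ∑ y ∈ piAntidiag univ (N - ∑ i, τ i), g (y + τ) * powV p y / mfact y := by
  rw [sum_piAntidiag_eq_sum_piAntidiag_add hτ _ fun x hx => by
    rw [descFactV_eq_zero_of_not_le hx, zero_mul, zero_mul, zero_div], mul_sum]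
  refine sum_congr rfl fun y _ => ?_
  have hpow : powV p (y + τ) = powV p y * powV p τ := by
    simp only [powV, Pi.add_apply, pow_add, prod_mul_distrib]
  have hmfact := descFactV_add_mul_mfact y τ
  have hτ0 : descFactV (y + τ) τ ≠ 0 := left_ne_zero_of_mul (hmfact ▸ (mfact_pos _).ne')
  rw [← hmfact, hpow]
  field_simp [hτ0, (mfact_pos y).ne']

lemma sum_descFactV_powV_div_mfact {p : Fin m → ℝ} (hp : ∑ i, p i = 1) (M : ℕ)
    (τ : Fin m → ℕ) :
    ∑ y ∈ piAntidiag univ M, descFactV y τ * powV p y / mfact y =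
      powV p τ * M.descFactorial (∑ i, τ i) / M.factorial := by
  by_cases hτ : ∑ i, τ i ≤ M
  · have h := sum_descFactV_mul_powV_div_mfact p hτ fun _ => 1
    simp only [mul_one, one_mul] at h
    rw [h, sum_piAntidiag_powV_div_mfact, hp, one_pow, mul_div_assoc]
    congr 1
    have hD : (M.descFactorial (∑ i, τ i) : ℝ) ≠ 0 :=
      Nat.cast_ne_zero.2 fun h => (Nat.descFactorial_eq_zero_iff_lt.1 h).not_ge hτ
    rw [← Nat.factorial_mul_descFactorial hτ, Nat.cast_mul]
    field_simp
  · rw [Nat.descFactorial_eq_zero_iff_lt.2 (not_le.1 hτ), Nat.cast_zero, mul_zero, zero_div]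
    refine sum_eq_zero fun y hy => ?_
    rw [descFactV_eq_zero_of_not_le fun hτy => hτ ?_, zero_mul, zero_div]
    rw [← (mem_piAntidiag.1 hy).1]
    exact sum_le_sum fun i _ => hτy i

lemma sum_descFactV_mul_descFactV_powV_div_mfact {N : ℕ} {p : Fin m → ℝ}
    (hp : ∑ i, p i = 1) {γ : Fin m → ℕ} (hγ : ∑ i, γ i ≤ N) (β : Fin m → ℕ) :
    ∑ x ∈ piAntidiag univ N, descFactV x γ * descFactV x β * powV p x / mfact x =
      powV p γ * ∑ κ ∈ below β, chooseV β κ * descFactV γ κ *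
        (powV p (β - κ) * (N - ∑ i, γ i).descFactorial (∑ i, (β - κ) i) /
          (N - ∑ i, γ i).factorial) := by
  rw [sum_descFactV_mul_powV_div_mfact p hγ]
  congr 1
  simp only [descFactV_add, sum_mul, sum_div]
  rw [sum_comm]
  refine sum_congr rfl fun κ _ => ?_
  rw [← sum_descFactV_powV_div_mfact hp, mul_sum]
  exact sum_congr rfl fun y _ => by ring

lemma sum_range_neg_one_pow_mul_choose_mul_pow {R : Type*} [CommRing R] {n j : ℕ}
    (hj : j < n) : ∑ k ∈ range (n + 1), (-1 : R) ^ k * n.choose k * (k : R) ^ j = 0 := by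
  have h := congr_fun (fwdDiff_iter_pow_eq_zero_of_lt (R := R) hj) 0
  rw [fwdDiff_iter_eq_sum_shift] at h
  simp only [zero_add, nsmul_eq_mul, mul_one, zsmul_eq_mul, Int.cast_mul, Int.cast_pow,
    Int.cast_neg, Int.cast_one, Int.cast_natCast, Pi.zero_apply] at h
  calc ∑ k ∈ range (n + 1), (-1 : R) ^ k * n.choose k * (k : R) ^ j
      = ∑ k ∈ range (n + 1), (-1) ^ n * ((-1) ^ (n - k) * n.choose k * (k : R) ^ j) := by
        refine sum_congr rfl fun k hk => ?_
        have hkn := Nat.lt_succ_iff.1 (mem_range.1 hk)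
        rw [← mul_assoc, ← mul_assoc, ← pow_add, show n + (n - k) = k + 2 * (n - k) by omega,
          pow_add, pow_mul, neg_one_sq, one_pow, mul_one]
    _ = 0 := by rw [← mul_sum, h, mul_zero]

lemma sum_below_chooseV_mul_neg_one_pow_mul_eval_eq_zero (α : Fin m → ℕ)
    {q : MvPolynomial (Fin m) ℝ} (hq : q.totalDegree < ∑ i, α i) :
    ∑ γ ∈ below α, chooseV α γ * (-1) ^ (∑ i, γ i) * MvPolynomial.eval (fun i => (γ i : ℝ)) q
      = 0 := by
  conv_lhs => rw [q.as_sum]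
  simp only [map_sum, MvPolynomial.eval_monomial, mul_sum]
  rw [sum_comm]
  refine sum_eq_zero fun e he => ?_
  obtain ⟨i, hi⟩ : ∃ i, e i < α i := by
    by_contra! h
    have hdeg := MvPolynomial.le_totalDegree he
    rw [Finsupp.sum_fintype _ _ fun _ => rfl] at hdeg
    exact (hdeg.trans_lt hq).not_ge (sum_le_sum fun i _ => h i)
  have hfactor : ∑ γ ∈ below α, chooseV α γ * (-1) ^ (∑ i, γ i) *
        (MvPolynomial.coeff e q * e.prod fun j k => (γ j : ℝ) ^ k) =
      MvPolynomial.coeff e q *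
        ∏ j, ∑ k ∈ range (α j + 1), (-1 : ℝ) ^ k * (α j).choose k * (k : ℝ) ^ e j := by
    rw [prod_univ_sum, mul_sum]
    refine sum_congr rfl fun γ _ => ?_
    rw [Finsupp.prod_fintype _ _ fun _ => pow_zero _, chooseV, ← prod_pow_eq_pow_sum,
      prod_mul_distrib, prod_mul_distrib]
    ring
  rw [hfactor, prod_eq_zero (mem_univ i) (sum_range_neg_one_pow_mul_choose_mul_pow hi),
    mul_zero]

lemma MvPolynomial.totalDegree_finsetProd_le_card {σ ι R : Type*} [CommSemiring R]
    (s : Finset ι) (f : ι → MvPolynomial σ R) (hf : ∀ i ∈ s, (f i).totalDegree ≤ 1) :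
    (∏ i ∈ s, f i).totalDegree ≤ #s :=
  (totalDegree_finsetProd s f).trans ((sum_le_sum hf).trans (by simp))

lemma natCast_descFactorial_eq_prod {R : Type*} [CommRing R] (n k : ℕ) :
    (n.descFactorial k : R) = ∏ j ∈ range k, ((n : R) - j) := by
  rw [← descPochhammer_eval_eq_descFactorial, descPochhammer_eval_eq_prod_range]

open MvPolynomial in
lemma exists_totalDegree_le_eval_eq_descFactV_mul_descFactorial (κ : Fin m → ℕ) (N r : ℕ) :
    ∃ q : MvPolynomial (Fin m) ℝ, q.totalDegree ≤ ∑ i, κ i + r ∧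
      ∀ γ : Fin m → ℕ, ∑ i, γ i ≤ N →
        eval (fun i => (γ i : ℝ)) q = descFactV γ κ * (N - ∑ i, γ i).descFactorial r := by
  refine ⟨(∏ i, ∏ j ∈ range (κ i), (X i - C (j : ℝ))) *
    ∏ j ∈ range r, (C ((N : ℝ) - j) - ∑ i, X i), ?_, fun γ hγ => ?_⟩
  · refine (totalDegree_mul _ _).trans (add_le_add ?_ ?_)
    · refine (totalDegree_finsetProd _ _).trans (sum_le_sum fun i _ => ?_)
      refine (totalDegree_finsetProd_le_card _ _ fun j _ => ?_).trans (card_range _).le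
      exact (totalDegree_sub_C_le _ _).trans (totalDegree_X _).le
    · refine (totalDegree_finsetProd_le_card _ _ fun j _ => ?_).trans (card_range _).le
      refine (totalDegree_sub _ _).trans (max_le (by rw [totalDegree_C]; exact zero_le_one) ?_)
      exact totalDegree_finsetSum_le fun i _ => (totalDegree_X i).le
  · simp only [map_mul, map_prod, map_sub, eval_X, eval_C, map_sum, descFactV,
      natCast_descFactorial_eq_prod, Nat.cast_sub hγ, Nat.cast_sum]
    congr 1
    exact prod_congr rfl fun j _ => by ring

/-- `L_α(x; ρ, N) / ((-N)_{|α|} 𝛒^α)` at lattice points, for an arbitrary weight vector `p`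
in place of `𝛒`. -/
noncomputable def krawtchoukL (N : ℕ) (p : Fin m → ℝ) (α x : Fin m → ℕ) : ℝ :=
  ∑ γ ∈ below α, chooseV α γ * (-1) ^ (∑ i, γ i) /
    (N.descFactorial (∑ i, γ i) * powV p γ) * descFactV x γ

lemma sum_krawtchoukL_mul_descFactV_powV_div_mfact_eq_zero {N : ℕ} {p : Fin m → ℝ}
    (hp : ∑ i, p i = 1) (hp0 : ∀ i, p i ≠ 0) {α β : Fin m → ℕ}
    (hβ : ∑ i, β i < ∑ i, α i) (hα : ∑ i, α i ≤ N) :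
    ∑ x ∈ piAntidiag univ N, krawtchoukL N p α x * descFactV x β * powV p x / mfact x = 0 := by
  have hγN : ∀ γ ∈ below α, ∑ i, γ i ≤ N := fun γ hγ =>
    (sum_le_sum fun i _ => mem_below.1 hγ i).trans hα
  have hterm : ∀ γ ∈ below α,
      chooseV α γ * (-1) ^ (∑ i, γ i) / (N.descFactorial (∑ i, γ i) * powV p γ) *
          ∑ x ∈ piAntidiag univ N, descFactV x γ * descFactV x β * powV p x / mfact x =
        ∑ κ ∈ below β, chooseV β κ * powV p (β - κ) / N.factorial *
          (chooseV α γ * (-1) ^ (∑ i, γ i) *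
            (descFactV γ κ * (N - ∑ i, γ i).descFactorial (∑ i, (β - κ) i))) := by
    intro γ hγ
    have hfact : ((N - ∑ i, γ i).factorial : ℝ) * N.descFactorial (∑ i, γ i) = N.factorial :=
      mod_cast Nat.factorial_mul_descFactorial (hγN γ hγ)
    have hD : (N.descFactorial (∑ i, γ i) : ℝ) ≠ 0 :=
      right_ne_zero_of_mul (hfact ▸ Nat.cast_ne_zero.2 (Nat.factorial_ne_zero N))
    rw [sum_descFactV_mul_descFactV_powV_div_mfact hp (hγN γ hγ), ← hfact, mul_sum, mul_sum]
    refine sum_congr rfl fun κ _ => ?_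
    field_simp [powV_ne_zero hp0 γ, hD, Nat.factorial_ne_zero]
  calc _ = ∑ γ ∈ below α, chooseV α γ * (-1) ^ (∑ i, γ i) /
          (N.descFactorial (∑ i, γ i) * powV p γ) *
          ∑ x ∈ piAntidiag univ N, descFactV x γ * descFactV x β * powV p x / mfact x := by
        simp only [krawtchoukL, sum_mul, sum_div, mul_sum]
        rw [sum_comm]
        exact sum_congr rfl fun γ _ => sum_congr rfl fun x _ => by ring
    _ = ∑ κ ∈ below β, chooseV β κ * powV p (β - κ) / N.factorial *
          ∑ γ ∈ below α, chooseV α γ * (-1) ^ (∑ i, γ i) *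
            (descFactV γ κ * (N - ∑ i, γ i).descFactorial (∑ i, (β - κ) i)) := by
        rw [sum_congr rfl hterm, sum_comm]
        simp only [mul_sum]
    _ = 0 := by
        refine sum_eq_zero fun κ hκ => ?_
        obtain ⟨q, hq, hqeval⟩ :=
          exists_totalDegree_le_eval_eq_descFactV_mul_descFactorial κ N (∑ i, (β - κ) i)
        rw [sum_add_sum_sub_of_le (mem_below.1 hκ)] at hq
        rw [sum_congr rfl fun γ hγ => by rw [← hqeval γ (hγN γ hγ)],
          sum_below_chooseV_mul_neg_one_pow_mul_eval_eq_zero α (hq.trans_lt hβ), mul_zero]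

end

lemma ZN_eq_piAntidiag (d N : ℕ) : ZN d N = piAntidiag univ N := by
  ext x
  simp only [ZN, mem_filter, Fintype.mem_piFinset, mem_range, mem_piAntidiag, mem_univ,
    implies_true, and_true, and_iff_right_iff_imp]
  rintro rfl i
  exact Nat.lt_succ_of_le (single_le_sum (fun j _ => Nat.zero_le (x j)) (mem_univ i))

lemma sum_brho (d : ℕ) (ρ : Fin d → ℝ) : ∑ i, brho d ρ i = 1 := by
  simp [brho, Fin.sum_univ_castSucc]

lemma brho_pos {d : ℕ} {ρ : Fin d → ℝ} (hρ : ∀ i, 0 < ρ i) (hρs : ∑ i, ρ i < 1)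
    (i : Fin (d + 1)) : 0 < brho d ρ i := by
  induction i using Fin.lastCases with
  | last => simpa [brho] using hρs
  | cast j => simpa [brho] using hρ j

lemma bpow_eq_powV (d : ℕ) (ρ : Fin d → ℝ) : bpow d ρ = powV (brho d ρ) := rfl

lemma monicL_natCast (d N : ℕ) (ρ : Fin d → ℝ) (α x : Fin (d + 1) → ℕ) :
    monicL d N ρ α (fun i => (x i : ℝ)) =
      poch (-(N : ℝ)) (∑ i, α i) * bpow d ρ α * krawtchoukL N (brho d ρ) α x := by
  rw [monicL, krawtchoukL]
  congr 1
  refine sum_congr rfl fun γ _ => ?_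
  rw [pochV_neg_natCast, poch_neg_natCast, mono_natCast, descFactV_eq_chooseV_mul_mfact,
    ← bpow_eq_powV]
  field_simp [(mfact_pos γ).ne']

lemma monicL_leading_coeff {d N : ℕ} {ρ : Fin d → ℝ} (hρ : ∀ i, 0 < ρ i)
    (hρs : ∑ i, ρ i < 1) {α : Fin (d + 1) → ℕ} (hN : ∑ i, α i ≤ N) :
    poch (-(N : ℝ)) (∑ i, α i) * bpow d ρ α *
        (pochV (fun i => -(α i : ℝ)) α * (-1 : ℝ) ^ (∑ i, α i) /
          (mfact α * poch (-(N : ℝ)) (∑ i, α i) * bpow d ρ α)) = 1 := by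
  have hpoch : poch (-(N : ℝ)) (∑ i, α i) ≠ 0 := by
    rw [poch_neg_natCast]
    exact mul_ne_zero (pow_ne_zero _ (by norm_num)) (Nat.cast_ne_zero.2
      fun h => (Nat.descFactorial_eq_zero_iff_lt.1 h).not_ge hN)
  have hbpow : bpow d ρ α ≠ 0 := powV_ne_zero (fun i => (brho_pos hρ hρs i).ne') α
  have hlead : pochV (fun i => -(α i : ℝ)) α * (-1 : ℝ) ^ (∑ i, α i) = mfact α := by
    rw [pochV_neg_natCast, mul_comm, ← mul_assoc, ← pow_add, Even.neg_one_pow ⟨_, rfl⟩,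
      one_mul, descFactV_self]
  rw [hlead]
  field_simp [(mfact_pos α).ne']

theorem monicKrawtchouk_orthogonal_and_monic_general (d N : ℕ) (ρ : Fin d → ℝ)
    (hρ : ∀ i, 0 < ρ i ∧ ρ i < 1) (hρs : ∑ i, ρ i < 1)
    (α : Fin (d + 1) → ℕ) (hN : ∑ i, α i ≤ N) :
    (∀ β : Fin (d + 1) → ℕ, ∑ i, β i < ∑ i, α i →
        ∑ x ∈ ZN d N,
          monicL d N ρ α (fun i => (x i : ℝ)) * mono β (fun i => (x i : ℝ)) *
            bpow d ρ x / mfact x = 0) ∧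
      poch (-(N : ℝ)) (∑ i, α i) * bpow d ρ α *
          (pochV (fun i => -(α i : ℝ)) α * (-1 : ℝ) ^ (∑ i, α i) /
            (mfact α * poch (-(N : ℝ)) (∑ i, α i) * bpow d ρ α)) = 1 := by
  have hρ₀ : ∀ i, 0 < ρ i := fun i => (hρ i).1
  refine ⟨fun β hβ => ?_, monicL_leading_coeff hρ₀ hρs hN⟩
  have horth := sum_krawtchoukL_mul_descFactV_powV_div_mfact_eq_zero (sum_brho d ρ)
    (fun i => (brho_pos hρ₀ hρs i).ne') hβ hN
  simp only [ZN_eq_piAntidiag, monicL_natCast, mono_natCast, bpow_eq_powV]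
  rw [← mul_zero (poch (-(N : ℝ)) (∑ i, α i) * powV (brho d ρ) α), ← horth, mul_sum]
  exact sum_congr rfl fun x _ => by ring

/-- the monic Krawtchouk polynomial is orthogonal to lower degrees and
is monic. -/
theorem monicKrawtchouk_orthogonal_and_monic (d N : ℕ) (hd : 1 ≤ d) (ρ : Fin d → ℝ)
    (hρ : ∀ i, 0 < ρ i ∧ ρ i < 1) (hρs : ∑ i, ρ i < 1)
    (α : Fin (d + 1) → ℕ) (h1 : 1 ≤ ∑ i, α i) (hN : ∑ i, α i ≤ N) :
    (∀ β : Fin (d + 1) → ℕ, ∑ i, β i < ∑ i, α i →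
        ∑ x ∈ ZN d N,
          monicL d N ρ α (fun i => (x i : ℝ)) * mono β (fun i => (x i : ℝ)) *
            bpow d ρ x / mfact x = 0) ∧
      poch (-(N : ℝ)) (∑ i, α i) * bpow d ρ α *
          (pochV (fun i => -(α i : ℝ)) α * (-1 : ℝ) ^ (∑ i, α i) /
            (mfact α * poch (-(N : ℝ)) (∑ i, α i) * bpow d ρ α)) = 1 :=
  monicKrawtchouk_orthogonal_and_monic_general d N ρ hρ hρs α hN
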